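/- arXiv:1811.05552 — 4 statements merged into one kernel-verified Lean document; each statement's English description precedes it below -/
import Mathlib

section
/- Let V be a finite-dimensional vector space over a field Λ, let a : V → V be a linear operator, and let c : V → ℝ ∪ {-∞} be a function with c(v) = -∞ iff v = 0. Let m ≥ 2, A > 0, and suppose that for every nonzero x ∈ V one has the telescoping identity: the sum over j = 0,...,m-1 of (c(aʲx) - c(aʲ⁺¹x)) equals m·A, where each summand c(aʲx) - c(aʲ⁺¹x) is nonnegative (here a⁰ = id). Suppose further that there exists a linear subspace W ⊆ V of dimension dim W > ((m-1)/m)·dim V such that c(w) - c(a(w)) > A for all nonzero w ∈ W. Then the subspace I = W ∩ a(W) ∩ ... ∩ a^{m-1}(W) is nonzero and any nonzero x ∈ I yields a contradiction; hence no such subspace W exists. -/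
/-!
Each `comap (a ^ j) W` has codimension at most `codim W`, so `I = ⋂_{j<m} comap (a ^ j) W` has
codimension at most `m · codim W`, which the dimension bound on `W` makes smaller than `dim V`.
A nonzero `x ∈ I` has all of `x, a x, …, a^(m-1) x` in `W`, so each of the `m` drops of the
telescoping sum exceeds `A`, and their sum exceeds `m · A`.
-/

open Module Submodule

section Codimension

variable {K V : Type*} [DivisionRing K] [AddCommGroup V] [Module K V]

theorem LinearMap.finrank_quotient_ker_le {M : Type*} [AddCommGroup M] [Module K M]
    [FiniteDimensional K M] (f : V →ₗ[K] M) : finrank K (V ⧸ LinearMap.ker f) ≤ finrank K M :=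
  f.quotKerEquivRange.finrank_eq ▸ Submodule.finrank_le _

theorem Submodule.finrank_quotient_comap_le {V' : Type*} [AddCommGroup V'] [Module K V']
    [FiniteDimensional K V'] (f : V →ₗ[K] V') (W : Submodule K V') :
    finrank K (V ⧸ W.comap f) ≤ finrank K (V' ⧸ W) := by
  have hker : W.comap f = LinearMap.ker (W.mkQ ∘ₗ f) := by rw [LinearMap.ker_comp, ker_mkQ]
  rw [hker]
  exact (W.mkQ ∘ₗ f).finrank_quotient_ker_le

theorem Submodule.finrank_quotient_iInf_le [FiniteDimensional K V] {ι : Type*} [Fintype ι]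
    (p : ι → Submodule K V) : finrank K (V ⧸ ⨅ i, p i) ≤ ∑ i, finrank K (V ⧸ p i) := by
  have hker : ⨅ i, p i = LinearMap.ker (LinearMap.pi fun i => (p i).mkQ) := by
    simp only [LinearMap.ker_pi, ker_mkQ]
  rw [hker, ← finrank_pi_fintype]
  exact LinearMap.finrank_quotient_ker_le _

theorem Module.End.exists_ne_zero_forall_pow_apply_mem [FiniteDimensional K V]
    (a : Module.End K V) (W : Submodule K V) {m : ℕ}
    (h : m * finrank K (V ⧸ W) < finrank K V) : ∃ x ≠ 0, ∀ j < m, (a ^ j) x ∈ W := by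
  set I := ⨅ j : Fin m, W.comap (a ^ (j : ℕ))
  have hI : finrank K (V ⧸ I) < finrank K V := calc
    finrank K (V ⧸ I) ≤ ∑ j : Fin m, finrank K (V ⧸ W.comap (a ^ (j : ℕ))) :=
      finrank_quotient_iInf_le _
    _ ≤ ∑ _j : Fin m, finrank K (V ⧸ W) :=
      Finset.sum_le_sum fun j _ => finrank_quotient_comap_le _ _
    _ = m * finrank K (V ⧸ W) := by simp
    _ < finrank K V := h
  have hI_ne_bot : I ≠ ⊥ := by
    rintro hbot
    rw [hbot, (quotEquivOfEqBot ⊥ rfl).finrank_eq] at hI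
    exact lt_irrefl _ hI
  obtain ⟨x, hxI, hx⟩ := exists_mem_ne_zero_of_ne_bot hI_ne_bot
  exact ⟨x, hx, fun j hj => (mem_iInf _).mp hxI ⟨j, hj⟩⟩

end Codimension

namespace EReal

variable {ι : Type*} {s : Finset ι} {f g : ι → EReal}

theorem ne_bot_of_sum_ne_bot (h : ∑ i ∈ s, f i ≠ ⊥) {i : ι} (hi : i ∈ s) : f i ≠ ⊥ :=
  fun hf => h (WithBot.sum_eq_bot_iff.mpr ⟨i, hi, hf⟩)

theorem sum_lt_sum_of_nonempty (hs : s.Nonempty) (hlt : ∀ i ∈ s, f i < g i) :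
    ∑ i ∈ s, f i < ∑ i ∈ s, g i := by
  induction hs using Finset.Nonempty.cons_induction with
  | singleton i => simpa using hlt i (by simp)
  | cons i s hi hs ih =>
    simp only [Finset.sum_cons]
    exact add_lt_add (hlt i (by simp)) (ih fun j hj => hlt j (by simp [hj]))

end EReal

theorem no_large_subspace_with_big_drop_general
    {Λ V : Type*} [Field Λ] [AddCommGroup V] [Module Λ V] [FiniteDimensional Λ V]
    (a : V →ₗ[Λ] V) (c : V → EReal)
    (hc0 : ∀ v : V, c v = ⊥ ↔ v = 0)
    (m : ℕ) (hm : 2 ≤ m) (A : ℝ)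
    (htel : ∀ x : V, x ≠ 0 →
      (∑ j ∈ Finset.range m, (c ((a ^ j) x) - c ((a ^ (j + 1)) x)))
        = (((m : ℝ) * A : ℝ) : EReal)) :
    ∀ W : Submodule Λ V,
      ((m - 1 : ℝ) / (m : ℝ)) * (Module.finrank Λ V) < (Module.finrank Λ W : ℝ) →
      (∀ w ∈ W, w ≠ 0 → (A : EReal) < c w - c (a w)) → False := by
  intro W hdim hW
  have hcodim : m * finrank Λ (V ⧸ W) < finrank Λ V := by
    have hsum := W.finrank_quotient_add_finrank
    rw [div_mul_eq_mul_div, div_lt_iff₀ (by positivity)] at hdim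
    rw [← hsum] at hdim ⊢
    push_cast at hdim
    exact_mod_cast (by linarith : (m : ℝ) * finrank Λ (V ⧸ W) < finrank Λ (V ⧸ W) + finrank Λ W)
  obtain ⟨x, hx0, hxW⟩ := Module.End.exists_ne_zero_forall_pow_apply_mem a W hcodim
  have hdrop : ∀ j ∈ Finset.range m, (A : EReal) < c ((a ^ j) x) - c ((a ^ (j + 1)) x) := by
    intro j hj
    rw [pow_succ', Module.End.mul_apply]
    refine hW _ (hxW j (Finset.mem_range.mp hj)) fun h0 => ?_
    -- a zero iterate would make this drop `⊥ - ⊥ = ⊥`, but the telescoping sum is finite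
    have hfin := EReal.ne_bot_of_sum_ne_bot (htel x hx0 ▸ EReal.coe_ne_bot _) hj
    rw [pow_succ', Module.End.mul_apply, h0, map_zero, (hc0 0).mpr rfl, EReal.bot_sub] at hfin
    exact hfin rfl
  have hlt := EReal.sum_lt_sum_of_nonempty (by simp; omega) hdrop
  rw [htel x hx0, Finset.sum_const, Finset.card_range, ← EReal.coe_nsmul, nsmul_eq_mul] at hlt
  exact lt_irrefl _ hlt

/-- Pigeonhole lemma for filtration drops: if the telescoping sum
`∑_{j<m} (c(aʲx) - c(aʲ⁺¹x)) = m·A` with nonnegative summands for every nonzero `x`, then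
there is no subspace `W` of dimension `> ((m-1)/m)·dim V` on which the drop
`c(w) - c(a w)` exceeds `A` for every nonzero `w`. -/
theorem no_large_subspace_with_big_drop
    {Λ V : Type*} [Field Λ] [AddCommGroup V] [Module Λ V] [FiniteDimensional Λ V]
    (a : V →ₗ[Λ] V) (c : V → EReal)
    (hc0 : ∀ v : V, c v = ⊥ ↔ v = 0)
    (m : ℕ) (hm : 2 ≤ m) (A : ℝ) (hA : 0 < A)
    (hnonneg : ∀ x : V, x ≠ 0 → ∀ j : ℕ, j < m →
      (0 : EReal) ≤ c ((a ^ j) x) - c ((a ^ (j + 1)) x))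
    (htel : ∀ x : V, x ≠ 0 →
      (∑ j ∈ Finset.range m, (c ((a ^ j) x) - c ((a ^ (j + 1)) x)))
        = (((m : ℝ) * A : ℝ) : EReal)) :
    ∀ W : Submodule Λ V,
      ((m - 1 : ℝ) / (m : ℝ)) * (Module.finrank Λ V) < (Module.finrank Λ W : ℝ) →
      (∀ w ∈ W, w ≠ 0 → (A : EReal) < c w - c (a w)) → False :=
  no_large_subspace_with_big_drop_general a c hc0 m hm A htel
end

section
/- Let V be a B-dimensional vector space over a field Λ, a : V → V a linear operator, and c : V → ℝ ∪ {-∞} a function with c(v) = -∞ iff v = 0, such that c(x) - c(a(x)) ≥ 0 for all nonzero x and the sum over j = 0,...,m-1 of (c(aʲx) - c(aʲ⁺¹x)) equals a constant S for every nonzero x ∈ V (with a⁰ = id, m ≥ 2). Define the multiplication spectrum β₁ ≤ ... ≤ β_B as the values c(e) - c(a(e)) over a suitable orthogonal basis (or: as the spectral values of a with respect to c). Then at least ⌈B/m⌉ of these values are at most S/m. -/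
/-!
The telescoping identity forces `a` to be injective and `c` to be finite on nonzero vectors.
Orthogonality of both `e` and `a ∘ e` then gives every nonzero `x` an index `j` in its support
whose drop `c (e j) - c (a (e j))` is at most the drop `c x - c (a x)`: take `j` where the
maximum defining `c (a x)` is attained. So on the span `U` of the basis vectors whose drop exceeds
`S / m`, every nonzero vector has drop exceeding `S / m`, and no nonzero `x` can have
`x, a x, …, a ^ (m - 1) x` all in `U`, since the telescoping sum would then exceed `S`. The `m`
preimages `(a ^ j)⁻¹ U`, each of codimension at most the number `k` of small drops, therefore
intersect trivially, and `B ≤ m k`.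
-/

/-- A family `e` is *orthogonal* for a filtration function `c` and valuation `ν` if the
filtration of any linear combination is the maximum of the filtrations of the summands. -/
def IsOrthFamily {Λ V ι : Type*} [Field Λ] [AddCommGroup V] [Module Λ V] [Fintype ι]
    (ν : Λ → EReal) (c : V → EReal) (e : ι → V) : Prop :=
  ∀ lam : ι → Λ,
    c (∑ i, lam i • e i) = Finset.univ.sup fun i => c (e i) - ν (lam i)

section

open Module Finset

theorem EReal.coe_finset_sum {ι : Type*} (s : Finset ι) (f : ι → ℝ) :
    ((∑ i ∈ s, f i : ℝ) : EReal) = ∑ i ∈ s, (f i : EReal) :=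
  map_sum (⟨⟨Real.toEReal, EReal.coe_zero⟩, EReal.coe_add⟩ : ℝ →+ EReal) f s

section Codimension

variable {K V : Type*} [DivisionRing K] [AddCommGroup V] [Module K V] [FiniteDimensional K V]

theorem Submodule.finrank_le_finrank_comap (f : V →ₗ[K] V) (U : Submodule K V) :
    finrank K U ≤ finrank K (U.comap f) := by
  have hrank := (U.mkQ ∘ₗ f).finrank_range_add_finrank_ker
  have hquot := U.finrank_quotient_add_finrank
  have hrange := Submodule.finrank_le (LinearMap.range (U.mkQ ∘ₗ f))
  rw [LinearMap.ker_comp, Submodule.ker_mkQ] at hrank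
  omega

theorem Submodule.finrank_le_finrank_finsetInf_add {ι : Type*} (W : ι → Submodule K V)
    (s : Finset ι) (k : ℕ) (hW : ∀ i ∈ s, finrank K V ≤ finrank K (W i) + k) :
    finrank K V ≤ finrank K ↥(s.inf W) + s.card * k := by
  classical
  induction s using Finset.induction_on with
  | empty => rw [inf_empty, finrank_top]; omega
  | insert i s hi ih =>
    have hsup := Submodule.finrank_sup_add_finrank_inf_eq (W i) (s.inf W)
    have hle := Submodule.finrank_le (W i ⊔ s.inf W)
    have hWi := hW i (mem_insert_self i s)
    have hs := ih fun j hj => hW j (mem_insert_of_mem hj)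
    rw [inf_insert, card_insert_of_notMem hi]
    nlinarith

end Codimension

theorem Module.Basis.finrank_span_image {K V ι : Type*} [DivisionRing K] [AddCommGroup V]
    [Module K V] (e : Basis ι K V) (s : Finset ι) :
    finrank K (Submodule.span K (e '' s)) = s.card := by
  rw [Set.image_eq_range, finrank_span_eq_card (b := fun i : (s : Set ι) => e i)
    (e.linearIndependent.comp _ Subtype.val_injective)]
  simp

theorem EReal.eq_coe_sub_of_coe_sub_eq {q v : ℝ} {r : EReal} (h : (q : EReal) - r = v) :
    r = ((q - v : ℝ) : EReal) := by
  induction r using EReal.rec with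
  | bot => simp at h
  | top => simp [EReal.sub_top] at h
  | coe r =>
    rw [← EReal.coe_sub, EReal.coe_eq_coe_iff] at h
    rw [EReal.coe_eq_coe_iff]
    linarith

theorem Function.Injective.pow {R M : Type*} [Semiring R] [AddCommMonoid M] [Module R M]
    {f : Module.End R M} (hf : Function.Injective f) (n : ℕ) : Function.Injective (f ^ n) :=
  Module.End.coe_pow f n ▸ hf.iterate n

variable {Λ V : Type*} [Field Λ] [AddCommGroup V] [Module Λ V] {c : V → EReal}
  {a : V →ₗ[Λ] V} {m : ℕ} {S : ℝ}

theorem IsOrthFamily.apply_zero_eq_top {ι : Type*} [Fintype ι] {ν : Λ → EReal} {e : ι → V}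
    (he : IsOrthFamily ν c e) (hc0 : c 0 = ⊥) {i : ι} (hi : c (e i) ≠ ⊥) : ν 0 = ⊤ := by
  have hsup : univ.sup (fun j => c (e j) - ν 0) = ⊥ := by
    simpa [hc0] using (he 0).symm
  have hsub : c (e i) - ν 0 = ⊥ := (Finset.sup_eq_bot_iff _ _).1 hsup i (mem_univ i)
  rwa [sub_eq_add_neg, EReal.add_eq_bot_iff, EReal.neg_eq_bot_iff, or_iff_right hi] at hsub

theorem injective_of_sum_sub_eq (hc0 : c 0 = ⊥) (hm : 2 ≤ m)
    (htel : ∀ x : V, x ≠ 0 →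
      (∑ j ∈ range m, (c ((a ^ j) x) - c ((a ^ (j + 1)) x))) = (S : EReal)) :
    Function.Injective a := by
  refine (injective_iff_map_eq_zero a).2 fun x hax => ?_
  by_contra hx
  have hsum : ∑ j ∈ range m, (c ((a ^ j) x) - c ((a ^ (j + 1)) x)) = ⊥ := by
    refine WithBot.sum_eq_bot_iff.2 ⟨1, mem_range.2 hm, ?_⟩
    simp only [pow_succ, Module.End.mul_apply, hax, map_zero, hc0]
    exact EReal.bot_sub ⊥
  exact EReal.coe_ne_bot S ((htel x hx).symm.trans hsum)

theorem exists_coe_eq_of_sum_sub_eq (hc0 : ∀ v : V, c v = ⊥ ↔ v = 0) (hm : 0 < m)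
    (hnonneg : ∀ x : V, x ≠ 0 → (0 : EReal) ≤ c x - c (a x))
    (htel : ∀ x : V, x ≠ 0 →
      (∑ j ∈ range m, (c ((a ^ j) x) - c ((a ^ (j + 1)) x))) = (S : EReal))
    (ha : Function.Injective a) {y : V} (hy : y ≠ 0) : ∃ r : ℝ, c y = r := by
  have hterm (j : ℕ) : 0 ≤ c ((a ^ j) y) - c ((a ^ (j + 1)) y) := by
    rw [pow_succ', Module.End.mul_apply]
    exact hnonneg _ ((map_ne_zero_iff _ (ha.pow j)).2 hy)
  have hle : c y - c (a y) ≤ S := by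
    simpa [htel y hy] using single_le_sum (fun j _ => hterm j) (mem_range.2 hm)
  have hne_top : c y ≠ ⊤ := by
    intro htop
    rcases eq_or_ne (c (a y)) ⊤ with h | h
    · have := hnonneg y hy
      simp [htop, h, EReal.sub_top] at this
    · simp [htop, EReal.top_sub h] at hle
  exact ⟨(c y).toReal, (EReal.coe_toReal hne_top ((hc0 y).not.2 hy)).symm⟩

theorem IsOrthFamily.exists_mem_sub_le_of_mem_span {ι : Type*} [Fintype ι] {ν : Λ → EReal}
    {e : Basis ι Λ V} (he : IsOrthFamily ν c e) (hae : IsOrthFamily ν c fun j => a (e j))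
    (hc0 : c 0 = ⊥) (hfin : ∀ v : V, v ≠ 0 → ∃ r : ℝ, c v = r) (ha : Function.Injective a)
    {s : Set ι} {x : V} (hxs : x ∈ Submodule.span Λ (e '' s)) (hx : x ≠ 0) :
    ∃ j ∈ s, c (e j) - c (a (e j)) ≤ c x - c (a x) := by
  set lam := e.repr x
  have hcx : c x = univ.sup fun i => c (e i) - ν (lam i) := by
    simpa only [lam, e.sum_repr] using he lam
  have hcax : c (a x) = univ.sup fun i => c (a (e i)) - ν (lam i) := by
    simpa only [lam, ← map_smul, ← map_sum, e.sum_repr] using hae lam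
  obtain ⟨i, -⟩ := Finsupp.ne_iff.1 (e.repr.map_ne_zero_iff.2 hx)
  obtain ⟨j, -, hj⟩ := exists_mem_eq_sup univ ⟨i, mem_univ i⟩ fun i => c (a (e i)) - ν (lam i)
  obtain ⟨p, hp⟩ := hfin (e j) (e.ne_zero j)
  obtain ⟨q, hq⟩ := hfin (a (e j)) ((map_ne_zero_iff _ ha).2 (e.ne_zero j))
  obtain ⟨u, hu⟩ := hfin x hx
  obtain ⟨v, hv⟩ := hfin (a x) ((map_ne_zero_iff _ ha).2 hx)
  have hν : ν (lam j) = ((q - v : ℝ) : EReal) :=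
    EReal.eq_coe_sub_of_coe_sub_eq (by rw [← hq, ← hv, hcax, hj])
  have hj_mem : j ∈ s := by
    refine (e.mem_span_image.1 hxs) (Finsupp.mem_support_iff.2 fun h0 => ?_)
    have hν0 := he.apply_zero_eq_top hc0 (i := j) (by simp [hp])
    rw [← h0, hν] at hν0
    exact EReal.coe_ne_top _ hν0
  have hle : c (e j) - ν (lam j) ≤ c x :=
    hcx ▸ le_sup (f := fun i => c (e i) - ν (lam i)) (mem_univ j)
  refine ⟨j, hj_mem, ?_⟩
  rw [hp, hν, hu] at hle
  rw [hp, hq, hu, hv]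
  norm_cast at hle ⊢
  linarith

theorem finsetInf_comap_pow_eq_bot (hfin : ∀ v : V, v ≠ 0 → ∃ r : ℝ, c v = r)
    (ha : Function.Injective a) (hm : 0 < m)
    (htel : ∀ x : V, x ≠ 0 →
      (∑ j ∈ range m, (c ((a ^ j) x) - c ((a ^ (j + 1)) x))) = (S : EReal))
    {U : Submodule Λ V} (hU : ∀ x ∈ U, x ≠ 0 → ((S / m : ℝ) : EReal) < c x - c (a x)) :
    (range m).inf (fun j => U.comap (a ^ j)) = ⊥ := by
  refine (Submodule.eq_bot_iff _).2 fun x hx => ?_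
  by_contra hx0
  have hpow (j : ℕ) : (a ^ j) x ≠ 0 := (map_ne_zero_iff _ (ha.pow j)).2 hx0
  choose u hu using fun j => hfin _ (hpow j)
  have hsum : ∑ j ∈ range m, (u j - u (j + 1)) = S := by
    have := htel x hx0
    simp only [hu, ← EReal.coe_sub, ← EReal.coe_finset_sum] at this
    exact_mod_cast this
  have hgt (j : ℕ) (hj : j ∈ range m) : S / m < u j - u (j + 1) := by
    have := hU _ (Submodule.mem_finsetInf.1 hx j hj) (hpow j)
    rwa [← Module.End.mul_apply, ← pow_succ', hu, hu, ← EReal.coe_sub, EReal.coe_lt_coe_iff]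
      at this
  have hlt := sum_lt_sum_of_nonempty (nonempty_range_iff.2 hm.ne') hgt
  rw [hsum, sum_const, card_range, nsmul_eq_mul, mul_div_cancel₀ _ (by positivity)] at hlt
  exact lt_irrefl _ hlt

end

theorem mult_spectrum_root_of_unity_bound_general
    {Λ V : Type*} [Field Λ] [AddCommGroup V] [Module Λ V]
    (ν : Λ → EReal)
    (B : ℕ)
    (a : V →ₗ[Λ] V) (c : V → EReal)
    (hc0 : ∀ v : V, c v = ⊥ ↔ v = 0)
    (m : ℕ) (hm : 2 ≤ m) (S : ℝ)
    (hnonneg : ∀ x : V, x ≠ 0 → (0 : EReal) ≤ c x - c (a x))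
    (htel : ∀ x : V, x ≠ 0 →
      (∑ j ∈ Finset.range m, (c ((a ^ j) x) - c ((a ^ (j + 1)) x))) = (S : EReal))
    (e : Module.Basis (Fin B) Λ V)
    (he : IsOrthFamily ν c e)
    (hae : IsOrthFamily ν c fun j => a (e j)) :
    ⌈(B : ℝ) / (m : ℝ)⌉₊ ≤
      Nat.card {j : Fin B | c (e j) - c (a (e j)) ≤ ((S / (m : ℝ) : ℝ) : EReal)} := by
  have : FiniteDimensional Λ V := e.finiteDimensional_of_finite
  have ha := injective_of_sum_sub_eq ((hc0 0).2 rfl) hm htel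
  have hfin (v : V) (hv : v ≠ 0) : ∃ r : ℝ, c v = r :=
    exists_coe_eq_of_sum_sub_eq hc0 (by omega) hnonneg htel ha hv
  set small := Finset.univ.filter fun j => c (e j) - c (a (e j)) ≤ ((S / m : ℝ) : EReal)
  set U := Submodule.span Λ (e '' ↑smallᶜ)
  have hU (x : V) (hx : x ∈ U) (hx0 : x ≠ 0) : ((S / m : ℝ) : EReal) < c x - c (a x) := by
    obtain ⟨j, hj, hle⟩ := he.exists_mem_sub_le_of_mem_span hae ((hc0 0).2 rfl) hfin ha hx hx0
    exact (not_le.1 (by simpa [small] using hj)).trans_le hle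
  have hcodimU : Module.finrank Λ V ≤ Module.finrank Λ U + small.card := by
    rw [e.finrank_span_image, Module.finrank_eq_card_basis e, Finset.card_compl_add_card]
  have hcodim := Submodule.finrank_le_finrank_finsetInf_add (fun j => U.comap (a ^ j))
    (Finset.range m) small.card fun j _ =>
      hcodimU.trans (by gcongr; exact U.finrank_le_finrank_comap _)
  rw [finsetInf_comap_pow_eq_bot hfin ha (by omega) htel hU, finrank_bot,
    Module.finrank_eq_card_basis e, Fintype.card_fin, Finset.card_range, zero_add] at hcodim
  rw [Nat.card_coe_set_eq, Set.ncard_eq_toFinset_card', Set.toFinset_ofPred, Nat.ceil_le,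
    div_le_iff₀ (by positivity)]
  exact_mod_cast hcodim.trans_eq (mul_comm _ _)

/-- If the drops `c(x) - c(a x)` are nonnegative and telescope to a constant
`S` after `m` steps for every nonzero `x`, then for any orthogonal spectral-value basis
`e` of the `B`-dimensional space `V` (so that both `e` and `a ∘ e` are orthogonal, and the
spectral values of `a` are the drops `c(eⱼ) - c(a eⱼ)`), at least `⌈B/m⌉` of the spectral
values are at most `S/m`. -/
theorem mult_spectrum_root_of_unity_bound
    {Λ V : Type*} [Field Λ] [AddCommGroup V] [Module Λ V]
    (ν : Λ → EReal)
    (hν_ne_bot : ∀ x : Λ, ν x ≠ ⊥)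
    (hν_zero : ∀ x : Λ, ν x = ⊤ ↔ x = 0)
    (hν_mul : ∀ x y : Λ, ν (x * y) = ν x + ν y)
    (hν_add : ∀ x y : Λ, min (ν x) (ν y) ≤ ν (x + y))
    (B : ℕ) (hB : Module.finrank Λ V = B)
    (a : V →ₗ[Λ] V) (c : V → EReal)
    (hc0 : ∀ v : V, c v = ⊥ ↔ v = 0)
    (m : ℕ) (hm : 2 ≤ m) (S : ℝ)
    (hnonneg : ∀ x : V, x ≠ 0 → (0 : EReal) ≤ c x - c (a x))
    (htel : ∀ x : V, x ≠ 0 →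
      (∑ j ∈ Finset.range m, (c ((a ^ j) x) - c ((a ^ (j + 1)) x))) = (S : EReal))
    (e : Module.Basis (Fin B) Λ V)
    (he : IsOrthFamily ν c e)
    (hae : IsOrthFamily ν c fun j => a (e j)) :
    ⌈(B : ℝ) / (m : ℝ)⌉₊ ≤
      Nat.card {j : Fin B | c (e j) - c (a (e j)) ≤ ((S / (m : ℝ) : ℝ) : EReal)} :=
  mult_spectrum_root_of_unity_bound_general ν B a c hc0 m hm S hnonneg htel e he hae
end

section
/- Let B ∈ ℤ≥0, let ℬ_ℤ be a multiset of intervals (bars) in ℝ indexed over ℤ-graded pieces, invariant under a free ℤ-action which shifts bars: the action of 1 ∈ ℤ sends a bar (a, b) to (a - A, b - A) for a fixed constant A > 0 (and shifts the grading by a fixed amount). Let ℬ₋ be the sub-multiset of bars whose lower endpoint lies in [0, A), ℬ₊ the sub-multiset of bars whose upper endpoint lies in [0, A). Suppose ℬ₊ consists entirely of finite bars. Then the number of endpoints of ℬ₋ (counting each infinite bar once and each finite bar twice) equals the number X of endpoints of ℬ_ℤ lying in [0, A). Concretely: X⁺(ℬ₋) + X⁻(ℬ₋) = X⁻(ℬ₊)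 + X⁻(ℬ₋), which reduces to X⁺(ℬ₋ \ ℬ₊) = X⁻(ℬ₊ \ ℬ₋), both sides being in bijection with the ℤ-quotient of the invariant sub-multiset of finite bars of length at least A. -/
/-!
The shift `T` moves every endpoint down by `A`, so each `ℤ`-orbit of finite bars has exactly one
member whose lower endpoint lies in `[0, A)` and exactly one whose upper endpoint does: the bar
`i` is sent to `T ^ ⌊x / A⌋ i`, where `x` is the relevant endpoint. Hence the finite bars of `ℬ₋`
and the bars of `ℬ₊` are both in bijection with the orbits of finite bars.
-/

open Set

section ShiftEquivariant

variable {ι : Type*} (T : Equiv.Perm ι) {A : ℝ}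

theorem apply_zpow_eq_sub_mul {f : ι → ℝ} (hf : ∀ i, f (T i) = f i - A) (m : ℤ) (i : ι) :
    f ((T ^ m) i) = f i - m * A := by
  induction m using Int.induction_on generalizing i with
  | zero => simp
  | succ n ih => rw [zpow_add_one, Equiv.Perm.mul_apply, ih, hf]; push_cast; ring
  | pred n ih =>
    have hinv : f (T⁻¹ i) = f i + A := by
      have := hf (T⁻¹ i)
      rw [Equiv.Perm.coe_inv, Equiv.apply_symm_apply] at this
      rw [Equiv.Perm.coe_inv]
      linarith
    rw [zpow_sub_one, Equiv.Perm.mul_apply, ih, hinv]; push_cast; ring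

variable {T}

theorem apply_zpow_floor_div_mem_Ico (hA : 0 < A) {f : ι → ℝ} (hf : ∀ i, f (T i) = f i - A)
    (i : ι) : f ((T ^ ⌊f i / A⌋) i) ∈ Ico 0 A := by
  rw [apply_zpow_eq_sub_mul T hf]
  exact ⟨Int.sub_floor_div_mul_nonneg _ hA, Int.sub_floor_div_mul_lt _ hA⟩

theorem zpow_floor_div_apply_zpow (hA : 0 < A) {f : ι → ℝ} (hf : ∀ i, f (T i) = f i - A)
    {i : ι} (hi : f i ∈ Ico 0 A) (m : ℤ) : (T ^ ⌊f ((T ^ m) i) / A⌋) ((T ^ m) i) = i := by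
  have hfloor : ⌊f ((T ^ m) i) / A⌋ = -m := by
    rw [apply_zpow_eq_sub_mul T hf, sub_div, mul_div_cancel_right₀ _ hA.ne', Int.floor_sub_intCast,
      Int.floor_eq_zero_iff.mpr ⟨div_nonneg hi.1 hA.le, (div_lt_one hA).mpr hi.2⟩, zero_sub]
  rw [hfloor, ← Equiv.Perm.mul_apply, ← zpow_add, neg_add_cancel, zpow_zero, Equiv.Perm.one_apply]

noncomputable def equivSetOfShift (hA : 0 < A) {f g : ι → ℝ} (hf : ∀ i, f (T i) = f i - A)
    (hg : ∀ i, g (T i) = g i - A) : {i | f i ∈ Ico 0 A} ≃ {i | g i ∈ Ico 0 A} where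
  toFun i := ⟨(T ^ ⌊g i / A⌋) i, apply_zpow_floor_div_mem_Ico hA hg i⟩
  invFun i := ⟨(T ^ ⌊f i / A⌋) i, apply_zpow_floor_div_mem_Ico hA hf i⟩
  left_inv i := Subtype.ext (zpow_floor_div_apply_zpow hA hf i.2 _)
  right_inv i := Subtype.ext (zpow_floor_div_apply_zpow hA hg i.2 _)

end ShiftEquivariant

theorem WithTop.nat_card_setOf_exists_coe_mem {ι α : Type*} (h : ι → WithTop α) (s : Set α) :
    Nat.card {i | ∃ b : α, h i = b ∧ b ∈ s}
      = Nat.card {j : {i // h i ≠ ⊤} | (h j).untop j.2 ∈ s} := by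
  refine Nat.card_congr <| (Equiv.subtypeSubtypeEquivSubtype
    (p := fun i => h i ≠ ⊤) fun ⟨b, hb, _⟩ => hb ▸ WithTop.coe_ne_top).symm.trans
    (Equiv.subtypeEquivRight fun j => ?_)
  obtain ⟨b, hb⟩ := WithTop.ne_top_iff_exists.mp j.2
  simp [← hb]

theorem barcode_endpoint_count_with_free_shift_action_general
    {ι : Type*} (T : Equiv.Perm ι)
    (lo : ι → ℝ) (hi : ι → WithTop ℝ)
    (A : ℝ) (hA : 0 < A)
    (hTlo : ∀ i, lo (T i) = lo i - A)
    (hThi : ∀ i, hi (T i) = (hi i).map (fun x => x - A)) :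
    Nat.card {i : ι | lo i ∈ Set.Ico (0 : ℝ) A}
        + Nat.card {i : ι | lo i ∈ Set.Ico (0 : ℝ) A ∧ hi i ≠ ⊤}
      = Nat.card {i : ι | lo i ∈ Set.Ico (0 : ℝ) A}
        + Nat.card {i : ι | ∃ b : ℝ, hi i = (b : WithTop ℝ) ∧ b ∈ Set.Ico (0 : ℝ) A} := by
  have hfinite : ∀ i, hi (T i) ≠ ⊤ ↔ hi i ≠ ⊤ := by simp [hThi]
  set Tfin : Equiv.Perm {i // hi i ≠ ⊤} := T.subtypePerm hfinite
  have hTfin : ∀ j, (hi (Tfin j)).untop (Tfin j).2 = (hi j).untop j.2 - A := fun j => by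
    rw [← WithTop.coe_inj, WithTop.coe_untop, Equiv.Perm.subtypePerm_apply, hThi]
    conv_lhs => rw [← WithTop.coe_untop (hi j) j.2]
    exact WithTop.map_coe _ _
  congr 1
  rw [WithTop.nat_card_setOf_exists_coe_mem, ← Nat.card_congr (equivSetOfShift (T := Tfin)
    (f := fun j => lo j) (g := fun j => (hi j).untop j.2) hA (fun j => hTlo j) hTfin)]
  exact Nat.card_congr ((Equiv.subtypeSubtypeEquivSubtypeInter _ _).trans
    (Equiv.subtypeEquivRight fun _ => and_comm)).symm

/-- Barcode with a free `ℤ`-action shifting bars down by `A > 0`: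
bars are indexed by `ι`, with lower endpoints `lo : ι → ℝ` and upper endpoints
`hi : ι → ℝ ∪ {+∞}`, and the generator `T` of the action satisfies
`lo (T i) = lo i - A`, `hi (T i) = hi i - A`. Let `ℬ₋` be the bars with lower endpoint in
`[0, A)` and `ℬ₊` those with (finite) upper endpoint in `[0, A)`. Then the total number of
endpoints of `ℬ₋` (all lower endpoints, plus the finite upper endpoints) equals the number
`X` of endpoints of the whole barcode lying in `[0, A)`, that is
`X⁻(ℬ₋) + X⁺(ℬ₋) = X⁻(ℬ₋) + X⁻(ℬ₊)`. -/
theorem barcode_endpoint_count_with_free_shift_action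
    {ι : Type*} (T : Equiv.Perm ι)
    (lo : ι → ℝ) (hi : ι → WithTop ℝ)
    (hbar : ∀ i, (lo i : WithTop ℝ) < hi i)
    (A : ℝ) (hA : 0 < A)
    (hTlo : ∀ i, lo (T i) = lo i - A)
    (hThi : ∀ i, hi (T i) = (hi i).map (fun x => x - A))
    (hfree : ∀ (m : ℤ) (i : ι), (T ^ m) i = i → m = 0)
    (hfin₁ : {i : ι | lo i ∈ Set.Ico (0 : ℝ) A}.Finite)
    (hfin₂ : {i : ι | ∃ b : ℝ, hi i = (b : WithTop ℝ) ∧ b ∈ Set.Ico (0 : ℝ) A}.Finite) :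
    Nat.card {i : ι | lo i ∈ Set.Ico (0 : ℝ) A}
        + Nat.card {i : ι | lo i ∈ Set.Ico (0 : ℝ) A ∧ hi i ≠ ⊤}
      = Nat.card {i : ι | lo i ∈ Set.Ico (0 : ℝ) A}
        + Nat.card {i : ι | ∃ b : ℝ, hi i = (b : WithTop ℝ) ∧ b ∈ Set.Ico (0 : ℝ) A} :=
  barcode_endpoint_count_with_free_shift_action_general T lo hi A hA hTlo hThi
end

section
/- Let G be a topological group, and define x, y ∈ G to be weakly conjugate if θ(x) = θ(y) for every continuous conjugation-invariant map θ : G → Y into any Hausdorff topological space Y. Then weak conjugacy is an equivalence relation, and if there exist h₀, ..., h_N ∈ G with h₀ = x, h_N = y, and the closures of consecutive conjugacy classes intersect (cl(Conj(h_j)) ∩ cl(Conj(h_{j+1})) ≠ ∅ for all j), then x and y are weakly conjugate. In particular, if y ∈ cl(Conj(x)) then x and y are weakly conjugate. -/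
/-!
A continuous conjugation-invariant map `θ` into a Hausdorff space is constant on each conjugacy
class, hence, its fibres being closed, on the closure of each conjugacy class. So two elements
whose conjugacy classes have intersecting closures are weakly conjugate, and a chain of such
elements is handled by transitivity.
-/

/-- Two elements of a topological group are *weakly conjugate* if they are not separated
by any continuous conjugation-invariant map to a Hausdorff topological space. -/
def WeaklyConjugate {G : Type*} [Group G] [TopologicalSpace G] (x y : G) : Prop :=
  ∀ (Y : Type) [TopologicalSpace Y] [T2Space Y] (θ : G → Y),
    Continuous θ → (∀ g h : G, θ (h * g * h⁻¹) = θ g) → θ x = θ y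

/-- The conjugacy class of an element of a group. -/
def conjClass {G : Type*} [Group G] (g : G) : Set G := {x : G | ∃ h : G, x = h * g * h⁻¹}

theorem Fin.reflTransGen_zero_last {α : Type*} {r : α → α → Prop} {N : ℕ} (f : Fin (N + 1) → α)
    (hf : ∀ j : Fin N, r (f j.castSucc) (f j.succ)) :
    Relation.ReflTransGen r (f 0) (f (Fin.last N)) := by
  suffices ∀ k : Fin (N + 1), Relation.ReflTransGen r (f 0) (f k) from this (Fin.last N)
  intro k
  induction k using Fin.induction with
  | zero => exact .refl
  | succ j ih => exact ih.tail (hf j)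

section

variable {G : Type*} [Group G]

theorem mem_conjClass_self (g : G) : g ∈ conjClass g :=
  ⟨1, by simp⟩

theorem eq_of_mem_closure_conjClass [TopologicalSpace G] {Y : Type*} [TopologicalSpace Y]
    [T1Space Y] {θ : G → Y} (hθ : Continuous θ) (hθconj : ∀ g h : G, θ (h * g * h⁻¹) = θ g)
    {g z : G} (hz : z ∈ closure (conjClass g)) : θ z = θ g := by
  have hconj : conjClass g ⊆ θ ⁻¹' {θ g} := by
    rintro _ ⟨h, rfl⟩
    exact hθconj g h
  exact closure_minimal hconj (isClosed_singleton.preimage hθ) hz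

variable [TopologicalSpace G]

theorem weaklyConjugate_equivalence : Equivalence (WeaklyConjugate (G := G)) where
  refl _ _ _ _ _ _ _ := rfl
  symm hxy Y _ _ θ hθ hθconj := (hxy Y θ hθ hθconj).symm
  trans hxy hyz Y _ _ θ hθ hθconj := (hxy Y θ hθ hθconj).trans (hyz Y θ hθ hθconj)

theorem weaklyConjugate_of_nonempty_closure_inter {x y : G}
    (hxy : (closure (conjClass x) ∩ closure (conjClass y)).Nonempty) : WeaklyConjugate x y := by
  intro Y _ _ θ hθ hθconj
  obtain ⟨z, hzx, hzy⟩ := hxy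
  rw [← eq_of_mem_closure_conjClass hθ hθconj hzx, eq_of_mem_closure_conjClass hθ hθconj hzy]

end

theorem weak_conjugacy_properties_general {G : Type*} [Group G] [TopologicalSpace G] :
    Equivalence (WeaklyConjugate (G := G)) ∧
    (∀ (x y : G) (N : ℕ) (h : Fin (N + 1) → G),
      h 0 = x → h (Fin.last N) = y →
      (∀ j : Fin N,
        (closure (conjClass (h j.castSucc)) ∩ closure (conjClass (h j.succ))).Nonempty) →
      WeaklyConjugate x y) ∧
    (∀ x y : G, y ∈ closure (conjClass x) → WeaklyConjugate x y) := by
  refine ⟨weaklyConjugate_equivalence, ?_, fun x y hy => ?_⟩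
  · rintro x y N h rfl rfl hchain
    refine Relation.reflTransGen_le_of_equivalence_of_le weaklyConjugate_equivalence le_rfl _ _ ?_
    exact Fin.reflTransGen_zero_last h fun j => weaklyConjugate_of_nonempty_closure_inter (hchain j)
  · exact weaklyConjugate_of_nonempty_closure_inter ⟨y, hy, subset_closure (mem_conjClass_self y)⟩

/-- Weak conjugacy is an equivalence relation; if `x` and `y` are joined
by a finite chain `h₀ = x, …, h_N = y` whose consecutive conjugacy-class closures
intersect, then `x` and `y` are weakly conjugate; in particular this holds whenever
`y ∈ cl(Conj(x))`. -/
theorem weak_conjugacy_properties {G : Type*} [Group G] [TopologicalSpace G]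
    [IsTopologicalGroup G] :
    Equivalence (WeaklyConjugate (G := G)) ∧
    (∀ (x y : G) (N : ℕ) (h : Fin (N + 1) → G),
      h 0 = x → h (Fin.last N) = y →
      (∀ j : Fin N,
        (closure (conjClass (h j.castSucc)) ∩ closure (conjClass (h j.succ))).Nonempty) →
      WeaklyConjugate x y) ∧
    (∀ x y : G, y ∈ closure (conjClass x) → WeaklyConjugate x y) :=
  weak_conjugacy_properties_general
end
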